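/- arXiv:2212.11358 — 2 statements merged into one kernel-verified Lean document; each statement's English description precedes it below -/
import Mathlib

section
/- Consider the one-step Lax–Friedrichs finite volume update $\overline{u}_m^{\,n+1} = \overline{u}_m^{\,n} - \frac{\Delta t}{|S_m|} \sum_{p \in \mathcal{V}_m} l_{mp}\, \mathcal{F}(\overline{u}_m^{\,n}, \overline{u}_p^{\,n}, \mathbf{n}_{mp})$ with numerical flux $\mathcal{F}(u,v,\mathbf{n}) = \frac{1}{2}(\mathbf{F}(u) + \mathbf{F}(v)) \cdot \mathbf{n} - \frac{\gamma}{2}(v - u)$, where $\gamma \geq \sup_w \|\mathbf{F}'(w)\|_2$ and $\mathbf{F} : \mathbb{R} \to \mathbb{R}^2$ is continuously differentiable. If the CFL condition $\gamma\, \Delta t \, \big(\sum_{p \in \mathcal{V}_m} l_{mp}\big) \leq |S_m|$ holds for each $m$, and the outward face normals satisfy $\sum_{p \in \mathcal{V}_m} l_{mp}\, \mathbf{n}_{mp} = \mathbf{0}$ (closed polygon condition), then $\overline{u}_m^{\,n+1}$ is a convex combination of $\overline{u}_m^{\,n}$ and its neighbors $\{\overline{u}_p^{\,n}\}$, and hence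 $\min_{p \in \mathcal{V}_m \cup \{m\}} \overline{u}_p^{\,n} \leq \overline{u}_m^{\,n+1} \leq \max_{p \in \mathcal{V}_m \cup \{m\}} \overline{u}_p^{\,n}$. -/
open scoped RealInnerProductSpace

/-!
Splitting off `⟪F u, n⟫`, which sums to zero over a closed polygon, the Lax–Friedrichs flux becomes
`⟪F u, n⟫ - a (v - u)` with `a = (γ - θ) / 2`, where `θ (v - u) = ⟪F v - F u, n⟫` and `|θ| ≤ γ` by the
mean value inequality. Hence `a ∈ [0, γ]`, so the update is `u + ∑ C_p (u_p - u)` with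
`C_p = Δt l_p a_p / |S|` nonnegative and, by the CFL condition, `∑ C_p ≤ 1`: a convex combination.
-/

open Finset

section ConvexCombination

variable {ι : Type*} [Fintype ι]

theorem exists_convex_combination_of_incremental {C : ι → ℝ} (hC : ∀ p, 0 ≤ C p)
    (hCsum : ∑ p, C p ≤ 1) (um : ℝ) (uN : ι → ℝ) :
    ∃ c : Option ι → ℝ, (∀ j, 0 ≤ c j) ∧ (∑ j, c j) = 1 ∧
      um + ∑ p, C p * (uN p - um) = c none * um + ∑ p, c (some p) * uN p := by
  refine ⟨fun j => j.elim (1 - ∑ p, C p) C, fun j => ?_, ?_, ?_⟩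
  · cases j with
    | none => exact sub_nonneg.mpr hCsum
    | some p => exact hC p
  · simp [Fintype.sum_option]
  · simp only [Option.elim, mul_sub, sum_sub_distrib, ← sum_mul]
    ring

theorem le_convex_combination {c : Option ι → ℝ} (hc : ∀ j, 0 ≤ c j) (hc1 : ∑ j, c j = 1)
    {Lb um : ℝ} {uN : ι → ℝ} (hum : Lb ≤ um) (huN : ∀ p, Lb ≤ uN p) :
    Lb ≤ c none * um + ∑ p, c (some p) * uN p := by
  calc Lb = c none * Lb + ∑ p, c (some p) * Lb := by
        rw [← sum_mul, ← add_mul, ← Fintype.sum_option, hc1, one_mul]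
    _ ≤ c none * um + ∑ p, c (some p) * uN p := by
        gcongr with p
        · exact hc none
        · exact hc (some p)
        · exact huN p

theorem convex_combination_le {c : Option ι → ℝ} (hc : ∀ j, 0 ≤ c j) (hc1 : ∑ j, c j = 1)
    {Ub um : ℝ} {uN : ι → ℝ} (hum : um ≤ Ub) (huN : ∀ p, uN p ≤ Ub) :
    c none * um + ∑ p, c (some p) * uN p ≤ Ub := by
  have := le_convex_combination hc hc1 (neg_le_neg hum) fun p => neg_le_neg (huN p)
  simp only [mul_neg, sum_neg_distrib] at this
  linarith

end ConvexCombination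

theorem exists_eq_mul_of_abs_le_mul {γ d δ : ℝ} (hγ : 0 ≤ γ) (h : |d| ≤ γ * |δ|) :
    ∃ θ, |θ| ≤ γ ∧ d = θ * δ := by
  rcases eq_or_ne δ 0 with rfl | hδ
  · exact ⟨0, by simpa using hγ, by simpa using h⟩
  · refine ⟨d / δ, ?_, (div_mul_cancel₀ d hδ).symm⟩
    rwa [abs_div, div_le_iff₀ (abs_pos.mpr hδ)]

section LaxFriedrichs

variable {E : Type*} [NormedAddCommGroup E] [InnerProductSpace ℝ E]

noncomputable def laxFriedrichsFlux (γ : ℝ) (F : ℝ → E) (u v : ℝ) (n : E) : ℝ :=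
  (1 / 2) * ⟪F u + F v, n⟫ - γ / 2 * (v - u)

theorem exists_inner_sub_eq_mul_sub {F F' : ℝ → E} (hF : ∀ w, HasDerivAt F (F' w) w) {γ : ℝ}
    (hγ : ∀ w, ‖F' w‖ ≤ γ) {n : E} (hn : ‖n‖ ≤ 1) (u v : ℝ) :
    ∃ θ, |θ| ≤ γ ∧ ⟪F v - F u, n⟫ = θ * (v - u) := by
  have hγ0 : 0 ≤ γ := (norm_nonneg _).trans (hγ 0)
  have hLip : ‖F v - F u‖ ≤ γ * |v - u| := by
    simpa only [Real.norm_eq_abs] using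
      convex_univ.norm_image_sub_le_of_norm_hasDerivWithin_le
        (fun x _ => (hF x).hasDerivWithinAt) (fun x _ => hγ x) (Set.mem_univ u) (Set.mem_univ v)
  refine exists_eq_mul_of_abs_le_mul hγ0 ?_
  calc |⟪F v - F u, n⟫| ≤ ‖F v - F u‖ * ‖n‖ := abs_real_inner_le_norm _ _
    _ ≤ ‖F v - F u‖ := mul_le_of_le_one_right (norm_nonneg _) hn
    _ ≤ γ * |v - u| := hLip

theorem exists_laxFriedrichsFlux_eq {F F' : ℝ → E} (hF : ∀ w, HasDerivAt F (F' w) w) {γ : ℝ}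
    (hγ : ∀ w, ‖F' w‖ ≤ γ) {n : E} (hn : ‖n‖ ≤ 1) (u v : ℝ) :
    ∃ a, 0 ≤ a ∧ a ≤ γ ∧ laxFriedrichsFlux γ F u v n = ⟪F u, n⟫ - a * (v - u) := by
  obtain ⟨θ, hθ, hjump⟩ := exists_inner_sub_eq_mul_sub hF hγ hn u v
  obtain ⟨hθl, hθu⟩ := abs_le.mp hθ
  refine ⟨(γ - θ) / 2, by linarith, by linarith, ?_⟩
  have hsum : ⟪F u + F v, n⟫ = 2 * ⟪F u, n⟫ + ⟪F v - F u, n⟫ := by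
    rw [inner_add_left, inner_sub_left]
    ring
  rw [laxFriedrichsFlux, hsum, hjump]
  ring

theorem sum_mul_inner_eq_zero {ι : Type*} [Fintype ι] {l : ι → ℝ} {nrm : ι → E}
    (hclosed : ∑ p, l p • nrm p = 0) (x : E) : ∑ p, l p * ⟪x, nrm p⟫ = 0 := by
  simp_rw [← inner_smul_right, ← inner_sum, hclosed, inner_zero_right]

end LaxFriedrichs

/-- Under the CFL condition, one step of the first-order Lax–Friedrichs finite
volume scheme produces a value that is a convex combination of the previous
local values, hence satisfies a local discrete maximum principle. -/
theorem lax_friedrichs_convex_combination (K : ℕ)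
    (F F' : ℝ → EuclideanSpace ℝ (Fin 2))
    (hF : ∀ w, HasDerivAt F (F' w) w)
    (γ : ℝ) (hγ : ∀ w, ‖F' w‖ ≤ γ)
    (l : Fin K → ℝ) (hl : ∀ p, 0 < l p)
    (nrm : Fin K → EuclideanSpace ℝ (Fin 2)) (hn : ∀ p, ‖nrm p‖ = 1)
    (hclosed : (∑ p, l p • nrm p) = 0)
    (Sm Δt : ℝ) (hSm : 0 < Sm) (hΔt : 0 < Δt)
    (hCFL : γ * Δt * (∑ p, l p) ≤ Sm)
    (um : ℝ) (uN : Fin K → ℝ) (u' : ℝ)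
    (hupd : u' = um - Δt / Sm * ∑ p, l p *
      ((1 / 2) * (inner ℝ (F um + F (uN p)) (nrm p) : ℝ) - γ / 2 * (uN p - um))) :
    (∃ c : Option (Fin K) → ℝ, (∀ j, 0 ≤ c j) ∧ (∑ j, c j) = 1 ∧
        u' = c none * um + ∑ p, c (some p) * uN p) ∧
      (∀ Lb : ℝ, Lb ≤ um → (∀ p, Lb ≤ uN p) → Lb ≤ u') ∧
      (∀ Ub : ℝ, um ≤ Ub → (∀ p, uN p ≤ Ub) → u' ≤ Ub) := by
  choose a ha0 haγ hflux using
    fun p => exists_laxFriedrichsFlux_eq hF hγ (hn p).le um (uN p)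
  have hratio : 0 ≤ Δt / Sm := div_nonneg hΔt.le hSm.le
  set C : Fin K → ℝ := fun p => Δt / Sm * l p * a p
  have hC : ∀ p, 0 ≤ C p := fun p => mul_nonneg (mul_nonneg hratio (hl p).le) (ha0 p)
  have hCsum : ∑ p, C p ≤ 1 :=
    calc ∑ p, C p ≤ ∑ p, Δt / Sm * l p * γ :=
          sum_le_sum fun p _ => mul_le_mul_of_nonneg_left (haγ p) (mul_nonneg hratio (hl p).le)
      _ = γ * Δt * (∑ p, l p) / Sm := by
          rw [mul_sum, sum_div]
          exact sum_congr rfl fun p _ => by ring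
      _ ≤ 1 := (div_le_one hSm).mpr hCFL
  have hflux_sum : ∑ p, l p * laxFriedrichsFlux γ F um (uN p) (nrm p)
      = -∑ p, l p * a p * (uN p - um) := by
    simp only [hflux, mul_sub, sum_sub_distrib, sum_mul_inner_eq_zero hclosed, mul_assoc,
      zero_sub]
  have hincr : u' = um + ∑ p, C p * (uN p - um) := by
    change u' = um - Δt / Sm * ∑ p, l p * laxFriedrichsFlux γ F um (uN p) (nrm p) at hupd
    rw [hupd, hflux_sum, mul_neg, sub_neg_eq_add, mul_sum]
    simp only [C, mul_assoc]
  obtain ⟨c, hc, hc1, hconv⟩ := exists_convex_combination_of_incremental hC hCsum um uN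
  rw [hconv] at hincr
  exact ⟨⟨c, hc, hc1, hincr⟩, fun Lb hum huN => hincr ▸ le_convex_combination hc hc1 hum huN,
    fun Ub hum huN => hincr ▸ convex_combination_le hc hc1 hum huN⟩
end

section
/- For the one-dimensional case with $\omega = [0,1]$, $V = \mathbb{P}^k([0,1])$, and $S_m = [\frac{m-1}{k+1}, \frac{m}{k+1}]$ for $m = 1, \dots, k+1$ the uniform subdivision, the projection matrix $P$ with entries $P_{mp} = (k+1)\int_{S_m} x^{p-1}\,dx$ is invertible for every $k \geq 0$. -/
/-!
Since `(k + 1) ∫_{m/(k+1)}^{(m+1)/(k+1)} x^p dx = ((m + 1)^(p+1) - m^(p+1)) / ((p + 1) (k + 1)^p)`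
and `(m + 1)^(p+1) - m^(p+1) = ∑_{j ≤ p} C(p+1, j) m^j`, the matrix factors as
`V T D`: the Vandermonde matrix of the distinct nodes `0, …, k`, an upper triangular matrix with
diagonal `C(p+1, p) = p + 1`, and a diagonal matrix of nonzero scalings.
-/

open Matrix Finset

theorem add_one_pow_succ_sub_pow {R : Type*} [CommRing R] (x : R) (p : ℕ) :
    (x + 1) ^ (p + 1) - x ^ (p + 1) = ∑ j ∈ range (p + 1), x ^ j * ((p + 1).choose j : R) := by
  rw [add_pow, sum_range_succ, Nat.choose_self]
  simp

def binomialDiffMatrix (R : Type*) [CommRing R] (n : ℕ) : Matrix (Fin n) (Fin n) R :=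
  of fun j p => if (j : ℕ) ≤ p then ((p + 1 : ℕ).choose j : R) else 0

theorem vandermonde_mul_binomialDiffMatrix_apply {R : Type*} [CommRing R] {n : ℕ}
    (v : Fin n → R) (i p : Fin n) :
    (vandermonde v * binomialDiffMatrix R n) i p =
      (v i + 1) ^ (p + 1 : ℕ) - v i ^ (p + 1 : ℕ) := by
  have hrange : (range n).filter (· ≤ (p : ℕ)) = range (p + 1) := by
    ext j; simp only [mem_filter, mem_range]; omega
  simp only [mul_apply, vandermonde_apply, binomialDiffMatrix, of_apply, mul_ite, mul_zero]
  rw [Fin.sum_univ_eq_sum_range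
      (fun j => if j ≤ (p : ℕ) then v i ^ j * ((p + 1 : ℕ).choose j : R) else 0),
    ← sum_filter, hrange, add_one_pow_succ_sub_pow]

theorem det_binomialDiffMatrix (R : Type*) [CommRing R] (n : ℕ) :
    (binomialDiffMatrix R n).det = n.factorial := by
  have hupper : (binomialDiffMatrix R n).IsUpperTriangular := fun j p hpj =>
    if_neg (not_le.2 hpj)
  rw [det_of_isUpperTriangular hupper, ← prod_range_add_one_eq_factorial, Nat.cast_prod,
    ← Fin.prod_univ_eq_prod_range]
  simp [binomialDiffMatrix]

theorem mul_integral_pow_div {c : ℝ} (hc : c ≠ 0) (a b : ℝ) (n : ℕ) :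
    c * ∫ x in a / c..b / c, x ^ n = (b ^ (n + 1) - a ^ (n + 1)) * ((n + 1) * c ^ n)⁻¹ := by
  rw [integral_pow, div_pow, div_pow]
  field_simp
  ring

/-- In 1D, for the uniform subdivision of `[0,1]` into `k+1` subcells and the
monomial basis of `ℙᵏ`, the projection matrix of subcell mean values is
invertible for every `k`. -/
theorem uniform_1d_projection_matrix_invertible (k : ℕ) :
    IsUnit (Matrix.of fun m p : Fin (k + 1) =>
      ((k : ℝ) + 1) *
        ∫ x in ((m : ℝ) / ((k : ℝ) + 1))..(((m : ℝ) + 1) / ((k : ℝ) + 1)),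
          x ^ (p : ℕ)) := by
  have hk : (k : ℝ) + 1 ≠ 0 := by positivity
  have hfactor : (Matrix.of fun m p : Fin (k + 1) =>
      ((k : ℝ) + 1) * ∫ x in ((m : ℝ) / ((k : ℝ) + 1))..(((m : ℝ) + 1) / ((k : ℝ) + 1)),
        x ^ (p : ℕ)) =
      vandermonde (fun m : Fin (k + 1) => (m : ℝ)) * binomialDiffMatrix ℝ (k + 1) *
        diagonal fun p : Fin (k + 1) => (((p : ℕ) + 1) * ((k : ℝ) + 1) ^ (p : ℕ))⁻¹ := by
    ext m p
    rw [of_apply, mul_diagonal, vandermonde_mul_binomialDiffMatrix_apply, mul_integral_pow_div hk]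
  have hvandermonde : (vandermonde fun m : Fin (k + 1) => (m : ℝ)).det ≠ 0 :=
    det_vandermonde_ne_zero_iff.2 (Nat.cast_injective.comp Fin.val_injective)
  rw [hfactor, isUnit_iff_isUnit_det, det_mul, det_mul, det_binomialDiffMatrix, det_diagonal]
  exact isUnit_iff_ne_zero.2 (mul_ne_zero (mul_ne_zero hvandermonde (by positivity))
    (prod_ne_zero_iff.2 fun p _ => by positivity))
end
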